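/- arXiv:2308.15760 — 5 statements merged into one kernel-verified Lean document; each statement's English description precedes it below -/
import Mathlib

section
/- Let h : ℝⁿ → ℝ ∪ {±∞} be positively homogeneous of degree γ > 0, i.e., h(λw) = λ^γ h(w) for all λ > 0 and all w in the domain of h. Then for any w in the domain of h and any limiting subgradient z ∈ ∂h(w), one has ⟨z, w⟩ = γ h(w). -/
open Filter Topology
open scoped RealInnerProductSpace

noncomputable section

abbrev En (n : ℕ) := EuclideanSpace ℝ (Fin n)

/-- Regular (Fréchet) subgradients of an extended-real-valued function. -/
def RegSubgrad {n : ℕ} (f : En n → EReal) (x : En n) : Set (En n) :=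
  {v | ∀ ε : ℝ, 0 < ε → ∃ δ : ℝ, 0 < δ ∧ ∀ u : En n, ‖u - x‖ < δ → u ≠ x →
      f x + (((inner ℝ v (u - x) : ℝ) - ε * ‖u - x‖ : ℝ) : EReal) ≤ f u}

/-- Limiting (Mordukhovich) subgradients. -/
def LimSubgrad {n : ℕ} (f : En n → EReal) (x : En n) : Set (En n) :=
  {v | ∃ xk vk : ℕ → En n,
      Tendsto xk atTop (nhds x) ∧ Tendsto vk atTop (nhds v) ∧
      Tendsto (fun k => f (xk k)) atTop (nhds (f x)) ∧
      ∀ k, vk k ∈ RegSubgrad f (xk k)}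

/-!
On the ray `t ↦ (1 + t) • x` a positively homogeneous `h` equals `(1 + t) ^ γ * h x`, which is
differentiable at `t = 0` with derivative `γ * h x`. A regular subgradient `v` at `x` gives a
first-order lower estimate of `h` along that line with slope `⟪v, x⟫`, and a lower estimate of a
differentiable function of one variable must have its derivative as slope: hence Euler's identity
`⟪v, x⟫ = γ * h x` for regular subgradients. It passes to limiting subgradients because both sides
converge along the approximating sequences.
-/

theorem HasDerivAt.eq_of_forall_eventually_le {φ : ℝ → ℝ} {d x c : ℝ} (hφ : HasDerivAt φ d x)
    (hle : ∀ ε > 0, ∀ᶠ t in 𝓝 0, φ x + c * t - ε * |t| ≤ φ (x + t)) : c = d := by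
  refine le_antisymm (le_of_forall_pos_le_add fun ε hε => ?_)
    (le_of_forall_pos_le_add fun ε hε => ?_)
  · have hslope : ∀ᶠ t in 𝓝[>] 0, c - ε ≤ t⁻¹ • (φ (x + t) - φ x) := by
      filter_upwards [nhdsWithin_le_nhds (hle ε hε), self_mem_nhdsWithin] with t ht htpos
      rw [abs_of_pos htpos] at ht
      rw [smul_eq_mul, ← div_eq_inv_mul, le_div_iff₀ htpos]
      linarith
    linarith [ge_of_tendsto hφ.tendsto_slope_zero_right hslope]
  · have hslope : ∀ᶠ t in 𝓝[<] 0, t⁻¹ • (φ (x + t) - φ x) ≤ c + ε := by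
      filter_upwards [nhdsWithin_le_nhds (hle ε hε), self_mem_nhdsWithin] with t ht htneg
      rw [abs_of_neg htneg] at ht
      rw [smul_eq_mul, ← div_eq_inv_mul, div_le_iff_of_neg htneg]
      linarith
    exact le_of_tendsto hφ.tendsto_slope_zero_left hslope

theorem hasDerivAt_one_add_rpow_mul (γ a : ℝ) :
    HasDerivAt (fun t : ℝ => (1 + t) ^ γ * a) (γ * a) 0 := by
  simpa using (((hasDerivAt_id (0 : ℝ)).const_add 1).rpow_const (p := γ)
    (Or.inl (by norm_num))).mul_const a

namespace RegSubgrad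

variable {n : ℕ} {f : En n → EReal} {x v : En n}

theorem eventually_le (hv : v ∈ RegSubgrad f x) {ε : ℝ} (hε : 0 < ε) :
    ∀ᶠ u in 𝓝 x, f x + ((⟪v, u - x⟫ - ε * ‖u - x‖ : ℝ) : EReal) ≤ f u := by
  obtain ⟨δ, hδ, hle⟩ := hv ε hε
  filter_upwards [Metric.ball_mem_nhds x hδ] with u hu
  rcases eq_or_ne u x with rfl | hux
  · simp
  · exact hle u (by rwa [← dist_eq_norm]) hux

theorem inner_eq_of_hasDerivAt_line (hv : v ∈ RegSubgrad f x) {y : En n} {φ : ℝ → ℝ} {d : ℝ}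
    (hline : ∀ᶠ t in 𝓝 0, f (x + t • y) = φ t) (hφ : HasDerivAt φ d 0) : ⟪v, y⟫ = d := by
  have hx : f x = φ 0 := by simpa using hline.self_of_nhds
  refine hφ.eq_of_forall_eventually_le fun ε hε => ?_
  have hε' : 0 < ε / (‖y‖ + 1) := by positivity
  have hpath : Tendsto (fun t : ℝ => x + t • y) (𝓝 0) (𝓝 x) := by
    simpa using ((continuous_id.smul continuous_const).const_add x).tendsto (0 : ℝ)
  filter_upwards [hpath.eventually (eventually_le hv hε'), hline] with t ht hφt
  rw [hx, hφt, add_sub_cancel_left, ← EReal.coe_add, EReal.coe_le_coe_iff, inner_smul_right,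
    norm_smul, Real.norm_eq_abs] at ht
  have hsmall : ε / (‖y‖ + 1) * (|t| * ‖y‖) ≤ ε * |t| := by
    rw [div_mul_eq_mul_div, div_le_iff₀ (by positivity)]
    nlinarith [abs_nonneg t, norm_nonneg y]
  simp only [zero_add]
  linarith

theorem inner_self_eq_of_homogeneous {γ : ℝ}
    (hhomog : ∀ l : ℝ, 0 < l → ∀ w : En n, f w ≠ ⊤ → f (l • w) = ((l ^ γ : ℝ) : EReal) * f w)
    (hx_top : f x ≠ ⊤) (hx_bot : f x ≠ ⊥) (hv : v ∈ RegSubgrad f x) :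
    ⟪v, x⟫ = γ * (f x).toReal := by
  have hray : ∀ᶠ t in 𝓝 (0 : ℝ), f (x + t • x) = (((1 + t) ^ γ * (f x).toReal : ℝ) : EReal) := by
    filter_upwards [eventually_gt_nhds (show (-1 : ℝ) < 0 by norm_num)] with t ht
    rw [show x + t • x = (1 + t) • x by rw [add_smul, one_smul], hhomog _ (by linarith) x hx_top,
      EReal.coe_mul, EReal.coe_toReal hx_top hx_bot]
  exact inner_eq_of_hasDerivAt_line hv hray (hasDerivAt_one_add_rpow_mul γ _)

end RegSubgrad

theorem statement_0_general {n : ℕ} (h : En n → EReal) (γ : ℝ)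
    (hhomog : ∀ l : ℝ, 0 < l → ∀ w : En n, h w ≠ ⊤ → h (l • w) = ((l ^ γ : ℝ) : EReal) * h w)
    (w : En n) (hw_top : h w ≠ ⊤) (hw_bot : h w ≠ ⊥)
    (z : En n) (hz : z ∈ LimSubgrad h w) :
    (inner ℝ z w : ℝ) = γ * (h w).toReal := by
  obtain ⟨xk, vk, hxk, hvk, hhk, hreg⟩ := hz
  have heuler : ∀ᶠ k in atTop, ⟪vk k, xk k⟫ = γ * (h (xk k)).toReal := by
    filter_upwards [hhk.eventually_ne hw_top, hhk.eventually_ne hw_bot] with k htop hbot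
    exact RegSubgrad.inner_self_eq_of_homogeneous hhomog htop hbot (hreg k)
  refine tendsto_nhds_unique ((hvk.inner hxk).congr' heuler) ?_
  exact ((EReal.tendsto_toReal hw_top hw_bot).comp hhk).const_mul γ

theorem statement_0 {n : ℕ} (h : En n → EReal) (γ : ℝ) (hγ : 0 < γ)
    (hhomog : ∀ l : ℝ, 0 < l → ∀ w : En n, h w ≠ ⊤ → h (l • w) = ((l ^ γ : ℝ) : EReal) * h w)
    (w : En n) (hw_top : h w ≠ ⊤) (hw_bot : h w ≠ ⊥)
    (z : En n) (hz : z ∈ LimSubgrad h w) :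
    (inner ℝ z w : ℝ) = γ * (h w).toReal :=
  statement_0_general h γ hhomog w hw_top hw_bot z hz
end
end

section
/- Let f : ℝⁿ → ℝ ∪ {+∞} be finite and locally lower semicontinuous at x̄, and let θ, θ̃ ∈ [0,1) with θ̃ < θ. Define g(x) := (max{f(x) − f(x̄),0})^{1−θ} and g̃(x) := (max{f(x) − f(x̄),0})^{1−θ̃}. If ∂^> g(x̄) ≠ ∅, then 0 ∈ ∂^> g̃(x̄). -/
/-!
With `p = (1 - θ̃) / (1 - θ) > 1` one has `g̃ = g ^ p`. An outer limiting subgradient `v` of `g`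
at `x̄` is a limit of regular subgradients `w k` of `g` at points `y k → x̄` with
`0 < g (y k) → 0`. By the chain rule, `p * g (y k) ^ (p - 1) • w k` is a regular subgradient of
`g̃` at `y k`, and these vectors tend to `0` because `p > 1`.
-/

open Filter Topology
open scoped ENNReal NNReal Pointwise

noncomputable section

/-- Outer limiting subgradients: limits of limiting subgradients taken at nearby
points where the function value is strictly larger and converges to `f x`. -/
def OuterSubgrad {n : ℕ} (f : En n → EReal) (x : En n) : Set (En n) :=
  {v | ∃ xk vk : ℕ → En n,
      Tendsto xk atTop (nhds x) ∧ Tendsto vk atTop (nhds v) ∧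
      Tendsto (fun k => f (xk k)) atTop (nhds (f x)) ∧
      (∀ k, f x < f (xk k)) ∧ ∀ k, vk k ∈ LimSubgrad f (xk k)}

/-- Distance from the origin to a set (`∞` for the empty set). -/
def DistZero {n : ℕ} (S : Set (En n)) : ℝ≥0∞ := EMetric.infEdist 0 S

/-- `f` is locally lower semicontinuous at `x`. -/
def LocallyLsc {n : ℕ} (f : En n → EReal) (x : En n) : Prop :=
  ∃ ε : ℝ, 0 < ε ∧ ∀ α : ℝ, (α : EReal) ≤ f x + (ε : ℝ) →
    IsClosed {y : En n | ‖y - x‖ ≤ ε ∧ f y ≤ (α : ℝ)}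

lemma regSubgrad_subset_limSubgrad {n : ℕ} (f : En n → EReal) (x : En n) :
    RegSubgrad f x ⊆ LimSubgrad f x :=
  fun v hv => ⟨fun _ => x, fun _ => v, tendsto_const_nhds, tendsto_const_nhds,
    tendsto_const_nhds, fun _ => hv⟩

lemma exists_seq_regSubgrad_of_mem_outerSubgrad {n : ℕ} {f : En n → EReal} {x v : En n}
    (hv : v ∈ OuterSubgrad f x) :
    ∃ yk wk : ℕ → En n, Tendsto yk atTop (𝓝 x) ∧ Tendsto wk atTop (𝓝 v) ∧
      Tendsto (fun k => f (yk k)) atTop (𝓝 (f x)) ∧ (∀ k, f x < f (yk k)) ∧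
      (∀ k, f (yk k) ≠ ⊤) ∧ ∀ k, wk k ∈ RegSubgrad f (yk k) := by
  obtain ⟨xk, vk, hxk, hvk, hfxk, hltk, hlim⟩ := hv
  -- The third coordinate records the value `f y`, so that convergence of values is built in.
  set S : Set (En n × En n × EReal) :=
    {q | q.2.2 = f q.1 ∧ f x < q.2.2 ∧ q.2.1 ∈ RegSubgrad f q.1}
  have hS : ∀ k, (xk k, vk k, f (xk k)) ∈ closure S := fun k => by
    obtain ⟨yj, wj, hyj, hwj, hfyj, hreg⟩ := hlim k
    refine mem_closure_of_tendsto (hyj.prodMk_nhds (hwj.prodMk_nhds hfyj)) ?_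
    filter_upwards [hfyj.eventually_const_lt (hltk k)] with j hj
    exact ⟨rfl, hj, hreg j⟩
  have hx : (x, v, f x) ∈ closure S := by
    rw [← closure_closure (s := S)]
    exact mem_closure_of_tendsto (hxk.prodMk_nhds (hvk.prodMk_nhds hfxk)) (.of_forall hS)
  have hfin : (x, v, f x) ∈ {q : En n × En n × EReal | q.2.2 < ⊤} :=
    (hltk 0).trans_le le_top
  obtain ⟨q, hqS, hq⟩ := mem_closure_iff_seq_limit.mp
    ((isOpen_lt continuous_snd.snd continuous_const).inter_closure ⟨hfin, hx⟩)
  refine ⟨fun k => (q k).1, fun k => (q k).2.1, (continuous_fst.tendsto _).comp hq,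
    ((continuous_fst.comp continuous_snd).tendsto _).comp hq, ?_, fun k => ?_, fun k => ?_,
    fun k => (hqS k).2.2.2⟩
  · exact (((continuous_snd.comp continuous_snd).tendsto _).comp hq).congr fun k => (hqS k).2.1
  · exact (hqS k).2.1 ▸ (hqS k).2.2.1
  · exact (hqS k).2.1 ▸ (hqS k).1.ne

lemma HasDerivAt.eventually_sub_mul_abs_le {φ : ℝ → ℝ} {a L ε : ℝ} (hφa : HasDerivAt φ L a)
    (hε : 0 < ε) : ∀ᶠ s in 𝓝 0, φ a + s * L - ε * |s| ≤ φ (a + s) := by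
  have ha : Tendsto (fun s => a + s) (𝓝 0) (𝓝 a) := by
    simpa using (continuous_const_add a).tendsto 0
  filter_upwards [ha.eventually ((hasDerivAt_iff_isLittleO.mp hφa).def hε)] with s hs
  simp only [add_sub_cancel_left, smul_eq_mul, Real.norm_eq_abs] at hs
  linarith [(abs_le.mp hs).1]

lemma smul_mem_regSubgrad_of_hasDerivAt {n : ℕ} {g h : En n → EReal} {φ : ℝ → ℝ}
    {x v : En n} {a L : ℝ} (hφ : Monotone φ) (hφa : HasDerivAt φ L a)
    (hgx : g x = a) (hhx : h x = φ a) (htop : ∀ u, g u = ⊤ → h u = ⊤)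
    (hle : ∀ u (b : ℝ), g u = b → (φ b : EReal) ≤ h u) (hv : v ∈ RegSubgrad g x) :
    L • v ∈ RegSubgrad h x := by
  intro ε hε
  obtain ⟨ε₂, hε₂, hLε₂⟩ : ∃ ε₂ > 0, L * ε₂ ≤ ε / 2 := by
    refine ⟨ε / (2 * (|L| + 1)), by positivity, ?_⟩
    calc L * (ε / (2 * (|L| + 1))) ≤ (|L| + 1) * (ε / (2 * (|L| + 1))) := by
          gcongr; linarith [le_abs_self L]
      _ = ε / 2 := by field_simp
  set M := ‖v‖ + ε₂
  have hM : 0 < M := by positivity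
  obtain ⟨η, hη, hφη⟩ := Metric.eventually_nhds_iff.mp
    (hφa.eventually_sub_mul_abs_le (by positivity : 0 < ε / (2 * M)))
  obtain ⟨δ, hδ, hgδ⟩ := hv ε₂ hε₂
  refine ⟨min δ (η / M), lt_min hδ (by positivity), fun u hu hux => ?_⟩
  have hgu := hgδ u (hu.trans_le (min_le_left _ _)) hux
  rw [hgx, ← EReal.coe_add] at hgu
  induction hgu' : g u using EReal.rec with
  | bot => rw [hgu'] at hgu; exact absurd hgu (not_le.mpr (EReal.bot_lt_coe _))
  | top => rw [htop u hgu']; exact le_top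
  | coe b =>
    -- `a + s ≤ g u`, so `φ (a + s) ≤ h u` by monotonicity; then expand `φ` to first order at `a`.
    set s := inner ℝ v (u - x) - ε₂ * ‖u - x‖
    have has : a + s ≤ b := by rw [hgu'] at hgu; exact_mod_cast hgu
    have hs : |s| ≤ M * ‖u - x‖ := by
      have := abs_real_inner_le_norm v (u - x)
      rw [abs_le] at this ⊢
      constructor <;> nlinarith [norm_nonneg (u - x)]
    have hsη : |s| < η := by
      calc |s| ≤ M * ‖u - x‖ := hs
        _ < M * (η / M) := by gcongr; exact hu.trans_le (min_le_right _ _)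
        _ = η := by field_simp
    have hφs := hφη (y := s) (by rwa [Real.dist_0_eq_abs])
    have herr : ε / (2 * M) * |s| ≤ ε / 2 * ‖u - x‖ := by
      calc ε / (2 * M) * |s| ≤ ε / (2 * M) * (M * ‖u - x‖) := by gcongr
        _ = ε / 2 * ‖u - x‖ := by field_simp
    rw [hhx]
    refine le_trans ?_ (hle u b hgu')
    rw [← EReal.coe_add, EReal.coe_le_coe_iff, real_inner_smul_left]
    have hLs : L * ε₂ * ‖u - x‖ ≤ ε / 2 * ‖u - x‖ := by gcongr
    have hsL : s * L = L * inner ℝ v (u - x) - L * ε₂ * ‖u - x‖ := by ring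
    linarith [hφ has]

lemma zero_mem_outerSubgrad_of_pow {n : ℕ} {g h : En n → EReal} {x : En n} {p : ℝ}
    (hp : 1 < p) (hgx : g x = 0) (htop : ∀ u, g u = ⊤ → h u = ⊤)
    (hpow : ∀ u (b : ℝ), g u = b → h u = ((max b 0 ^ p : ℝ) : EReal))
    (hne : (OuterSubgrad g x).Nonempty) :
    (0 : En n) ∈ OuterSubgrad h x := by
  obtain ⟨v, hv⟩ := hne
  obtain ⟨y, w, hy, hw, hgy, hlt, hfin, hreg⟩ := exists_seq_regSubgrad_of_mem_outerSubgrad hv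
  rw [hgx] at hgy hlt
  set b : ℕ → ℝ := fun k => (g (y k)).toReal
  have hb : ∀ k, g (y k) = b k := fun k => (EReal.coe_toReal (hfin k) (hlt k).ne_bot).symm
  have hbpos : ∀ k, 0 < b k := fun k => EReal.coe_pos.mp (hb k ▸ hlt k)
  have hb0 : Tendsto b atTop (𝓝 0) := by
    have := (EReal.tendsto_toReal EReal.zero_ne_top EReal.zero_ne_bot).comp hgy
    rwa [EReal.toReal_zero] at this
  have hhy : ∀ k, h (y k) = ((b k ^ p : ℝ) : EReal) := fun k => by
    rw [hpow _ _ (hb k), max_eq_left (hbpos k).le]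
  have hhx : h x = ((0 : ℝ) ^ p : ℝ) := by
    rw [hpow x 0 (by simpa using hgx), max_self]
  have hpow0 : ∀ q : ℝ, 0 < q → Tendsto (fun k => b k ^ q) atTop (𝓝 0) := fun q hq => by
    have := (Real.continuousAt_rpow_const 0 q (Or.inr hq.le)).tendsto.comp hb0
    rwa [Real.zero_rpow hq.ne'] at this
  refine ⟨y, fun k => (p * b k ^ (p - 1)) • w k, hy, ?_, ?_, fun k => ?_, fun k => ?_⟩
  · simpa using ((hpow0 (p - 1) (by linarith)).const_mul p).smul hw
  · simpa [hhx, hhy, Real.zero_rpow (by linarith : p ≠ 0)] using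
      EReal.tendsto_coe.mpr (hpow0 p (by linarith))
  · rw [hhx, hhy, Real.zero_rpow (by linarith), EReal.coe_lt_coe_iff]
    exact Real.rpow_pos_of_pos (hbpos k) p
  · refine regSubgrad_subset_limSubgrad h (y k) (smul_mem_regSubgrad_of_hasDerivAt
      (φ := fun t => max t 0 ^ p) ?_ ?_ (hb k) (hhy k ▸ ?_) htop
      (fun u c hc => (hpow u c hc).ge) (hreg k))
    · exact fun s t hst => Real.rpow_le_rpow (le_max_right _ _) (max_le_max hst le_rfl)
        (by linarith)
    · refine (Real.hasDerivAt_rpow_const (Or.inl (hbpos k).ne')).congr_of_eventuallyEq ?_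
      filter_upwards [lt_mem_nhds (hbpos k)] with t ht
      rw [max_eq_left ht.le]
    · rw [max_eq_left (hbpos k).le]

theorem statement_3_general {n : ℕ} (f : En n → EReal)
    (xb : En n) (c : ℝ) (hfc : f xb = (c : ℝ))
    (θ θt : ℝ) (hθt : θt < θ) (hθ1 : θ < 1)
    (g gt : En n → EReal)
    (hg : g = fun x => if f x = ⊤ then (⊤ : EReal)
      else (((max (f x - (c : ℝ)).toReal 0 : ℝ) ^ (1 - θ) : ℝ) : EReal))
    (hgt : gt = fun x => if f x = ⊤ then (⊤ : EReal)
      else (((max (f x - (c : ℝ)).toReal 0 : ℝ) ^ (1 - θt) : ℝ) : EReal))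
    (hne : (OuterSubgrad g xb).Nonempty) :
    (0 : En n) ∈ OuterSubgrad gt xb := by
  have h1θ : 0 < 1 - θ := by linarith
  have hp : 1 < (1 - θt) / (1 - θ) := by rw [one_lt_div h1θ]; linarith
  refine zero_mem_outerSubgrad_of_pow hp ?_ (fun u hu => ?_) (fun u b hb => ?_) hne
  · simp [hg, hfc, Real.zero_rpow h1θ.ne']
  · subst hg hgt
    dsimp only at hu ⊢
    split_ifs at hu ⊢ with hf
    exacts [rfl, absurd hu (EReal.coe_ne_top _)]
  · subst hg hgt
    dsimp only at hb ⊢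
    split_ifs at hb ⊢ with hf
    · exact absurd hb (EReal.top_ne_coe b)
    · rw [← EReal.coe_eq_coe_iff.mp hb, max_eq_left (Real.rpow_nonneg (le_max_right _ _) _),
        ← Real.rpow_mul (le_max_right _ _), mul_div_cancel₀ _ h1θ.ne']

/-- if `∂^> g(xb) ≠ ∅` for exponent `θ`, then `0 ∈ ∂^> g̃(xb)`
for every smaller exponent `θ̃ < θ`. -/
theorem statement_3 {n : ℕ} (f : En n → EReal) (hbot : ∀ x, f x ≠ ⊥)
    (xb : En n) (c : ℝ) (hfc : f xb = (c : ℝ)) (hloc : LocallyLsc f xb)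
    (θ θt : ℝ) (hθt0 : 0 ≤ θt) (hθt : θt < θ) (hθ1 : θ < 1)
    (g gt : En n → EReal)
    (hg : g = fun x => if f x = ⊤ then (⊤ : EReal)
      else (((max (f x - (c : ℝ)).toReal 0 : ℝ) ^ (1 - θ) : ℝ) : EReal))
    (hgt : gt = fun x => if f x = ⊤ then (⊤ : EReal)
      else (((max (f x - (c : ℝ)).toReal 0 : ℝ) ^ (1 - θt) : ℝ) : EReal))
    (hne : (OuterSubgrad g xb).Nonempty) :
    (0 : En n) ∈ OuterSubgrad gt xb :=
  statement_3_general f xb c hfc θ θt hθt hθ1 g gt hg hgt hne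
end
end

section
/- Let f : ℝⁿ → ℝ ∪ {+∞} be finite and locally lower semicontinuous at x̄, let θ ∈ [0,1), and define h(w) := liminf_{τ↓0, w'→w} (f(x̄ + τ w') − f(x̄)) / ((1−θ) τ^{1/(1−θ)}). Then h is lower semicontinuous and positively homogeneous of degree 1/(1−θ), i.e., h(λw) = λ^{1/(1−θ)} h(w) for all λ > 0 and w ∈ dom h; moreover, either h(0) = 0 or h(0) = −∞, and h is proper if and only if h(0) = 0. -/
open Filter Topology
open scoped ENNReal NNReal Pointwise

noncomputable section

/-- The `1/(1-θ)`-th subderivative of `f` at `x`. -/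
def ThetaSubderiv {n : ℕ} (f : En n → EReal) (x : En n) (θ : ℝ) (w : En n) : EReal :=
  Filter.liminf (fun p : ℝ × En n =>
      (((((1 - θ) * p.1 ^ (1 / (1 - θ)))⁻¹ : ℝ)) : EReal) * (f (x + p.1 • p.2) - f x))
    ((nhdsWithin 0 (Set.Ioi 0)) ×ˢ (nhds w))

/-!
The subderivative is a lower epi-limit in `w`, hence lower semicontinuous. The substitution
`τ ↦ τ / λ`, `w' ↦ λ w'` maps the difference quotient at `λ w` to `λ ^ γ` times the one at `w`
(`γ = 1 / (1 - θ)`), which gives homogeneity. Along `w' = 0` the quotient vanishes, so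
`h 0 ≤ 0`, and `h 0 = 2 ^ γ h 0` with `2 ^ γ ≠ 1` leaves only `h 0 ∈ {0, ⊥}`. Finally a value
`⊥` at `w` spreads to the whole ray `λ w`, `λ > 0`, and then to `0` by lower semicontinuity.
-/

theorem map_mulLeft_nhdsGT_zero {𝕜 : Type*} [Field 𝕜] [LinearOrder 𝕜]
    [IsStrictOrderedRing 𝕜] [TopologicalSpace 𝕜] [OrderTopology 𝕜] {x : 𝕜} (hx : 0 < x) :
    map (x * ·) (𝓝[>] 0) = 𝓝[>] 0 := by
  simpa [comap_mulLeft_nhdsGT_zero hx] using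
    map_comap_of_surjective (mul_left_surjective₀ hx.ne') (𝓝[>] (0 : 𝕜))

theorem lowerSemicontinuous_liminf_prod_nhds {α X β : Type*} [TopologicalSpace X]
    [CompleteLinearOrder β] [DenselyOrdered β] (G : α × X → β) (l : Filter α) :
    LowerSemicontinuous fun w => liminf G (l ×ˢ 𝓝 w) := by
  intro w y hy
  obtain ⟨y', hyy', hy'⟩ := exists_between hy
  obtain ⟨pa, hpa, pb, hpb, hG⟩ := eventually_prod_iff.mp (eventually_lt_of_lt_liminf hy')
  filter_upwards [eventually_eventually_nhds.mpr hpb] with w' hw'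
  exact hyy'.trans_le <| le_liminf_of_le (by isBoundedDefault) <|
    (hpa.prod_mk hw').mono fun p hp => (hG hp.1 hp.2).le

theorem LowerSemicontinuous.eq_bot_of_tendsto {X ι β : Type*} [TopologicalSpace X]
    [LinearOrder β] [OrderBot β] {h : X → β} (hh : LowerSemicontinuous h) {x : X}
    {u : ι → X} {l : Filter ι} [l.NeBot] (hu : Tendsto u l (𝓝 x))
    (hbot : ∀ᶠ i in l, h (u i) = ⊥) : h x = ⊥ := by
  by_contra hx
  obtain ⟨i, hi, hi'⟩ :=
    ((hu.eventually (hh x ⊥ (bot_lt_iff_ne_bot.mpr hx))).and hbot).exists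
  exact hi.ne' hi'

theorem EReal.eq_zero_or_eq_bot_of_eq_coe_mul {a : EReal} {r : ℝ} (hr : r ≠ 1) (ha : a ≤ 0)
    (h : a = r * a) : a = 0 ∨ a = ⊥ := by
  induction a using EReal.rec with
  | bot => exact Or.inr rfl
  | top => exact absurd ha (by simp)
  | coe a =>
    left
    have ha' : a = r * a := by exact_mod_cast h
    have : (r - 1) * a = 0 := by linarith
    exact_mod_cast (mul_eq_zero.mp this).resolve_left (sub_ne_zero.mpr hr)

namespace ThetaSubderiv

variable {n : ℕ} (f : En n → EReal) (x : En n) (θ : ℝ)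

/-- The difference quotient `Δ_τ f(x)(w)`, with `p = (τ, w)`. -/
def diffQuot (p : ℝ × En n) : EReal :=
  (((((1 - θ) * p.1 ^ (1 / (1 - θ)))⁻¹ : ℝ)) : EReal) * (f (x + p.1 • p.2) - f x)

theorem eq_liminf_diffQuot (w : En n) :
    ThetaSubderiv f x θ w = liminf (diffQuot f x θ) (𝓝[>] 0 ×ˢ 𝓝 w) :=
  rfl

theorem lowerSemicontinuous : LowerSemicontinuous (ThetaSubderiv f x θ) :=
  lowerSemicontinuous_liminf_prod_nhds (diffQuot f x θ) _

theorem diffQuot_rescale {l τ : ℝ} (hl : 0 < l) (hτ : 0 < τ) (w : En n) :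
    diffQuot f x θ (l⁻¹ * τ, l • w) =
      ((l ^ (1 / (1 - θ)) : ℝ) : EReal) * diffQuot f x θ (τ, w) := by
  have hsmul : (l⁻¹ * τ) • l • w = τ • w := by
    rw [smul_smul, mul_comm l⁻¹, inv_mul_cancel_right₀ hl.ne']
  have hcoef : ((1 - θ) * (l⁻¹ * τ) ^ (1 / (1 - θ)))⁻¹ =
      l ^ (1 / (1 - θ)) * ((1 - θ) * τ ^ (1 / (1 - θ)))⁻¹ := by
    rw [Real.mul_rpow (inv_nonneg.mpr hl.le) hτ.le, Real.inv_rpow hl.le]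
    have : l ^ (1 / (1 - θ)) ≠ 0 := (Real.rpow_pos_of_pos hl _).ne'
    field_simp
  simp only [diffQuot, hsmul, hcoef, EReal.coe_mul, mul_assoc]

theorem map_rescale_prod_nhds {l : ℝ} (hl : 0 < l) (w : En n) :
    map (fun p : ℝ × En n => (l⁻¹ * p.1, l • p.2)) (𝓝[>] 0 ×ˢ 𝓝 w) = 𝓝[>] 0 ×ˢ 𝓝 (l • w) := by
  rw [← prod_map_map_eq, map_mulLeft_nhdsGT_zero (inv_pos.mpr hl)]
  exact congrArg _ ((Homeomorph.smulOfNeZero l hl.ne').map_nhds_eq w)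

theorem smul {l : ℝ} (hl : 0 < l) (w : En n) :
    ThetaSubderiv f x θ (l • w) = ((l ^ (1 / (1 - θ)) : ℝ) : EReal) * ThetaSubderiv f x θ w := by
  have hrescale : ∀ᶠ p in 𝓝[>] 0 ×ˢ 𝓝 w, diffQuot f x θ (l⁻¹ * p.1, l • p.2) =
      ((l ^ (1 / (1 - θ)) : ℝ) : EReal) * diffQuot f x θ p :=
    (eventually_mem_nhdsWithin.prod_inl _).mono fun p hp => diffQuot_rescale f x θ hl hp p.2
  rw [eq_liminf_diffQuot, eq_liminf_diffQuot, ← map_rescale_prod_nhds hl, ← liminf_comp]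
  exact (liminf_congr hrescale).trans
    (EReal.liminf_const_mul_of_nonneg_of_ne_top (by positivity) (by simp))

theorem apply_zero_le {c : ℝ} (hfc : f x = c) : ThetaSubderiv f x θ 0 ≤ 0 := by
  have hzero : ∀ τ : ℝ, diffQuot f x θ (τ, 0) = 0 := fun τ => by
    simp only [diffQuot, smul_zero, add_zero, hfc, ← EReal.coe_sub, sub_self, EReal.coe_zero,
      mul_zero]
  have hpath : Tendsto (fun τ : ℝ => (τ, (0 : En n))) (𝓝[>] 0) (𝓝[>] 0 ×ˢ 𝓝 0) :=
    tendsto_id.prodMk tendsto_const_nhds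
  exact liminf_le_of_frequently_le
    (hpath.frequently (Frequently.of_forall fun τ => (hzero τ).le)) (by isBoundedDefault)

theorem apply_zero_eq_zero_or_eq_bot (hθ : θ ≠ 1) {c : ℝ} (hfc : f x = c) :
    ThetaSubderiv f x θ 0 = 0 ∨ ThetaSubderiv f x θ 0 = ⊥ := by
  have hγ : (1 : ℝ) / (1 - θ) ≠ 0 := one_div_ne_zero (sub_ne_zero.mpr hθ.symm)
  have htwo : (2 : ℝ) ^ (1 / (1 - θ)) ≠ 1 := fun h2 =>
    hγ ((Real.rpow_right_inj two_pos (by norm_num)).mp (h2.trans (Real.rpow_zero 2).symm))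
  refine EReal.eq_zero_or_eq_bot_of_eq_coe_mul htwo (apply_zero_le f x θ hfc) ?_
  simpa using smul f x θ two_pos 0

theorem apply_zero_eq_bot_of_eq_bot {w : En n} (hw : ThetaSubderiv f x θ w = ⊥) :
    ThetaSubderiv f x θ 0 = ⊥ := by
  have hray : Tendsto (fun t : ℝ => t • w) (𝓝[>] 0) (𝓝 0) :=
    ((continuous_id.smul continuous_const).tendsto' (0 : ℝ) 0 (zero_smul ℝ w)).mono_left
      nhdsWithin_le_nhds
  refine (lowerSemicontinuous f x θ).eq_bot_of_tendsto hray ?_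
  filter_upwards [self_mem_nhdsWithin] with t ht
  rw [smul f x θ ht, hw, EReal.coe_mul_bot_of_pos (Real.rpow_pos_of_pos ht _)]

end ThetaSubderiv

theorem statement_7_general {n : ℕ} (f : En n → EReal)
    (xb : En n) (c : ℝ) (hfc : f xb = (c : ℝ))
    (θ : ℝ) (hθ1 : θ < 1)
    (h : En n → EReal) (hh : h = fun w => ThetaSubderiv f xb θ w) :
    LowerSemicontinuous h ∧
      (∀ l : ℝ, 0 < l → ∀ w : En n, h w ≠ ⊤ →
        h (l • w) = ((l ^ (1 / (1 - θ)) : ℝ) : EReal) * h w) ∧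
      (h 0 = 0 ∨ h 0 = ⊥) ∧
      (((∀ w, h w ≠ ⊥) ∧ ∃ w, h w ≠ ⊤) ↔ h 0 = 0) := by
  obtain rfl : h = ThetaSubderiv f xb θ := hh
  have hzero := ThetaSubderiv.apply_zero_eq_zero_or_eq_bot f xb θ hθ1.ne hfc
  refine ⟨ThetaSubderiv.lowerSemicontinuous f xb θ,
    fun l hl w _ => ThetaSubderiv.smul f xb θ hl w, hzero, ?_, ?_⟩
  · rintro ⟨hproper, -⟩
    exact hzero.resolve_right (hproper 0)
  · intro h0
    refine ⟨fun w hw => ?_, 0, by simp [h0]⟩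
    simp [ThetaSubderiv.apply_zero_eq_bot_of_eq_bot f xb θ hw] at h0

/-- basic properties of the `1/(1-θ)`-th subderivative `h`:
lower semicontinuity, positive homogeneity of degree `1/(1-θ)`,
`h(0) ∈ {0, -∞}`, and properness iff `h(0) = 0`. -/
theorem statement_7 {n : ℕ} (f : En n → EReal) (hbot : ∀ x, f x ≠ ⊥)
    (xb : En n) (c : ℝ) (hfc : f xb = (c : ℝ)) (hloc : LocallyLsc f xb)
    (θ : ℝ) (hθ0 : 0 ≤ θ) (hθ1 : θ < 1)
    (h : En n → EReal) (hh : h = fun w => ThetaSubderiv f xb θ w) :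
    LowerSemicontinuous h ∧
      (∀ l : ℝ, 0 < l → ∀ w : En n, h w ≠ ⊤ →
        h (l • w) = ((l ^ (1 / (1 - θ)) : ℝ) : EReal) * h w) ∧
      (h 0 = 0 ∨ h 0 = ⊥) ∧
      (((∀ w, h w ≠ ⊥) ∧ ∃ w, h w ≠ ⊤) ↔ h 0 = 0) :=
  statement_7_general f xb c hfc θ hθ1 h hh
end
end

section
/- Let f : ℝⁿ → ℝ ∪ {+∞} be prox-regular at x̄ for 0, and let g(x) := √(max{f(x) − f(x̄), 0}). Then for every u ∈ ∂^> g(x̄), there exist τ ≥ 0, a unit vector w, sequences x_k → x̄ with f(x_k) → f(x̄) and f(x_k) > f(x̄), and v_k ∈ ∂f(x_k), such that (f(x_k) − f(x̄))/(½‖x_k − x̄‖²) → τ, (x_k − x̄)/‖x_k − x̄‖ → w, and v_k/‖x_k − x̄‖ → √(2τ)·u, with √(2τ)·u ∈ D(∂f)(x̄ | 0)(w). -/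
open Filter Topology
open scoped ENNReal NNReal Pointwise

noncomputable section

/-- Prox-regularity of `f` at `x` for the subgradient `0`, where `c = f x`. -/
def ProxRegularAt {n : ℕ} (f : En n → EReal) (x : En n) (c : ℝ) : Prop :=
  LocallyLsc f x ∧ (0 : En n) ∈ LimSubgrad f x ∧
    ∃ ε : ℝ, 0 < ε ∧ ∃ ρ : ℝ, 0 ≤ ρ ∧
      ∀ y v : En n, v ∈ LimSubgrad f y → ‖v‖ < ε → ‖y - x‖ < ε →
        f y < (c : ℝ) + (ε : ℝ) →
        ∀ x' : En n, ‖x' - x‖ ≤ ε →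
          f y + (((inner ℝ v (x' - y) : ℝ) - ρ / 2 * ‖x' - y‖ ^ 2 : ℝ) : EReal) ≤ f x'

/-- The graphical derivative `D(∂f)(x | 0)` of the subgradient mapping at `(x, 0)`:
`z ∈ D(∂f)(x|0)(w)` iff `(w, z)` is tangent to `gph ∂f` at `(x, 0)`. -/
def GraphDerivSubdiff {n : ℕ} (f : En n → EReal) (x : En n) (w : En n) : Set (En n) :=
  {z | ∃ (t : ℕ → ℝ) (wk zk : ℕ → En n),
      Tendsto t atTop (nhdsWithin 0 (Set.Ioi 0)) ∧
      Tendsto wk atTop (nhds w) ∧ Tendsto zk atTop (nhds z) ∧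
      ∀ k, t k • zk k ∈ LimSubgrad f (x + t k • wk k)}

/-!
Where `f = c + s²` with `s > 0` the chain rule gives `2s • ∂g ⊆ ∂f`, so an outer subgradient
`u` of `g` is a limit of `u k` with `2 s k • u k ∈ ∂f (y k)`, `f (y k) = c + (s k)²`, `s k ↓ 0`.
Testing prox-regularity at `x' = x̄` gives `(s k)² ≤ 2 s k ‖u k‖ r k + ρ/2 (r k)²` with
`r k = ‖y k - x̄‖`, so `s k / r k` stays bounded. By compactness, along a subsequence the
directions `(y k - x̄) / r k` tend to a unit vector `w` and `s k / r k → q`; then `τ = 2q²`, and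
`v k / r k = 2 (s k / r k) • u k → 2q • u = √(2τ) • u`.
-/

def sqrtExcess (c : ℝ) (a : EReal) : ℝ := √(max (a - c).toReal 0)

def sqrtExcessFn {n : ℕ} (f : En n → EReal) (c : ℝ) (x : En n) : EReal :=
  if f x = ⊤ then ⊤ else (sqrtExcess c (f x) : EReal)

section Scalar

variable {c : ℝ}

lemma sqrtExcess_coe_add_sq {s : ℝ} (hs : 0 ≤ s) : sqrtExcess c ((c + s ^ 2 : ℝ) : EReal) = s := by
  rw [sqrtExcess, ← EReal.coe_sub, EReal.toReal_coe, add_sub_cancel_left,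
    max_eq_left (sq_nonneg s), Real.sqrt_sq hs]

/-- Positivity of `sqrtExcess c a` already excludes `a = ⊥` and `a = ⊤`, where the value is `0`. -/
lemma eq_coe_add_sqrtExcess_sq {a : EReal} (h : 0 < sqrtExcess c a) :
    a = ((c + sqrtExcess c a ^ 2 : ℝ) : EReal) := by
  induction a using EReal.rec with
  | bot => simp [sqrtExcess] at h
  | top => simp [sqrtExcess] at h
  | coe m =>
    simp only [sqrtExcess, ← EReal.coe_sub, EReal.toReal_coe] at h ⊢
    have hm : 0 ≤ m - c := by
      by_contra! hm
      simp [max_eq_right hm.le] at h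
    rw [Real.sq_sqrt (le_max_of_le_right le_rfl), max_eq_left hm, add_sub_cancel]

lemma coe_add_sq_le_of_le_sqrtExcess {a : EReal} {t : ℝ} (ht : 0 < t) (h : t ≤ sqrtExcess c a) :
    ((c + t ^ 2 : ℝ) : EReal) ≤ a := by
  rw [eq_coe_add_sqrtExcess_sq (ht.trans_le h), EReal.coe_le_coe_iff]
  gcongr

lemma le_mul_of_sq_le {s r a b : ℝ} (hr : 0 ≤ r) (ha : 0 ≤ a) (hb : 0 ≤ b)
    (h : s ^ 2 ≤ a * s * r + b * r ^ 2) : s ≤ (a + b + 1) * r := by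
  rcases le_or_gt s r with hsr | hrs
  · nlinarith [mul_nonneg (add_nonneg ha hb) hr]
  · have : s * s ≤ s * ((a + b) * r) := by
      nlinarith [mul_le_mul_of_nonneg_left hrs.le (mul_nonneg hb hr)]
    nlinarith [le_of_mul_le_mul_left this (hr.trans_lt hrs)]

end Scalar

section ChainRule

variable {n : ℕ} {f : En n → EReal} {c : ℝ}

lemma sqrtExcessFn_of_ne_top {x : En n} (h : f x ≠ ⊤) :
    sqrtExcessFn f c x = sqrtExcess c (f x) :=
  if_neg h

lemma sqrtExcessFn_of_eq_coe_add_sq {x : En n} {s : ℝ} (hs : 0 ≤ s)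
    (hfx : f x = ((c + s ^ 2 : ℝ) : EReal)) : sqrtExcessFn f c x = s := by
  rw [sqrtExcessFn_of_ne_top (hfx ▸ EReal.coe_ne_top _), hfx, sqrtExcess_coe_add_sq hs]

lemma coe_add_sq_le_of_coe_le_sqrtExcessFn {x : En n} {t : ℝ} (ht : 0 < t)
    (h : (t : EReal) ≤ sqrtExcessFn f c x) : ((c + t ^ 2 : ℝ) : EReal) ≤ f x := by
  by_cases hx : f x = ⊤
  · exact hx ▸ le_top
  · rw [sqrtExcessFn_of_ne_top hx, EReal.coe_le_coe_iff] at h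
    exact coe_add_sq_le_of_le_sqrtExcess ht h

lemma eventually_sqrtExcessFn_eq {ι : Type*} {l : Filter ι} {y : ι → En n} {s : ℝ}
    (h : Tendsto (fun k => sqrtExcessFn f c (y k)) l (𝓝 (s : EReal))) :
    ∀ᶠ k in l, sqrtExcessFn f c (y k) = sqrtExcess c (f (y k)) := by
  filter_upwards [h.eventually_lt_const (EReal.coe_lt_top s)] with k hk
  refine sqrtExcessFn_of_ne_top fun htop => hk.ne ?_
  simp [sqrtExcessFn, htop]

lemma tendsto_sqrtExcess {ι : Type*} {l : Filter ι} {y : ι → En n} {s : ℝ}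
    (h : Tendsto (fun k => sqrtExcessFn f c (y k)) l (𝓝 (s : EReal))) :
    Tendsto (fun k => sqrtExcess c (f (y k))) l (𝓝 s) :=
  EReal.tendsto_coe.1 (h.congr' (eventually_sqrtExcessFn_eq h))

lemma smul_mem_regSubgrad_of_sqrtExcessFn {y u : En n} {s : ℝ} (hs : 0 < s)
    (hfy : f y = ((c + s ^ 2 : ℝ) : EReal)) (hu : u ∈ RegSubgrad (sqrtExcessFn f c) y) :
    (2 * s) • u ∈ RegSubgrad f y := by
  intro ε' hε'
  set ε := ε' / (2 * s)
  have hε : 0 < ε := by positivity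
  obtain ⟨δ, hδ, hu⟩ := hu ε hε
  -- The second bound keeps `s + L > 0`, where squaring the inequality for `√(f - c)` is monotone.
  refine ⟨min δ (s / (‖u‖ + ε)), lt_min hδ (by positivity), fun x hx hxy => ?_⟩
  set L := inner ℝ u (x - y) - ε * ‖x - y‖
  have hL : -s < L := by
    have hxs : (‖u‖ + ε) * ‖x - y‖ < s :=
      (lt_div_iff₀' (by positivity)).1 (hx.trans_le (min_le_right _ _))
    have := neg_abs_le (inner ℝ u (x - y))
    nlinarith [abs_real_inner_le_norm u (x - y)]
  have hgx : ((s + L : ℝ) : EReal) ≤ sqrtExcessFn f c x := by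
    have := hu x (hx.trans_le (min_le_left _ _)) hxy
    rwa [sqrtExcessFn_of_eq_coe_add_sq hs.le hfy, ← EReal.coe_add] at this
  have hfx := coe_add_sq_le_of_coe_le_sqrtExcessFn (by linarith) hgx
  rw [hfy, ← EReal.coe_add]
  refine le_trans (EReal.coe_le_coe_iff.2 ?_) hfx
  have h2sL : 2 * s * L = 2 * s * inner ℝ u (x - y) - ε' * ‖x - y‖ := by
    simp only [L, ε]
    field_simp
  rw [real_inner_smul_left]
  nlinarith [sq_nonneg L]

end ChainRule

section Subgradients

variable {n : ℕ} {f : En n → EReal} {c : ℝ}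

lemma mem_limSubgrad_of_eventually {x v : En n} {xk vk : ℕ → En n}
    (hx : Tendsto xk atTop (𝓝 x)) (hv : Tendsto vk atTop (𝓝 v))
    (hf : Tendsto (fun k => f (xk k)) atTop (𝓝 (f x)))
    (hreg : ∀ᶠ k in atTop, vk k ∈ RegSubgrad f (xk k)) : v ∈ LimSubgrad f x := by
  obtain ⟨N, hN⟩ := hreg.exists_forall_of_atTop
  exact ⟨fun k => xk (k + N), fun k => vk (k + N), (tendsto_add_atTop_iff_nat N).2 hx,
    (tendsto_add_atTop_iff_nat N).2 hv, (tendsto_add_atTop_iff_nat (f := fun k => f (xk k)) N).2 hf,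
    fun k => hN _ (Nat.le_add_left _ _)⟩

lemma smul_mem_limSubgrad_of_sqrtExcessFn {y u : En n} {s : ℝ} (hs : 0 < s)
    (hfy : f y = ((c + s ^ 2 : ℝ) : EReal)) (hu : u ∈ LimSubgrad (sqrtExcessFn f c) y) :
    (2 * s) • u ∈ LimSubgrad f y := by
  obtain ⟨yk, uk, hy, hu, hg, hreg⟩ := hu
  rw [sqrtExcessFn_of_eq_coe_add_sq hs.le hfy] at hg
  have hS := tendsto_sqrtExcess hg
  have hSpos : ∀ᶠ k in atTop, 0 < sqrtExcess c (f (yk k)) := hS.eventually_const_lt hs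
  refine mem_limSubgrad_of_eventually hy ((hS.const_mul 2).smul hu) ?_ ?_
  · rw [hfy]
    refine Tendsto.congr' ?_ (EReal.tendsto_coe.2 (tendsto_const_nhds.add (hS.pow 2)))
    filter_upwards [hSpos] with k hk using (eq_coe_add_sqrtExcess_sq hk).symm
  · filter_upwards [hSpos] with k hk
    exact smul_mem_regSubgrad_of_sqrtExcessFn hk (eq_coe_add_sqrtExcess_sq hk) (hreg k)

lemma exists_seq_of_mem_outerSubgrad_sqrtExcessFn {xb u : En n} (hfc : f xb = c)
    (hu : u ∈ OuterSubgrad (sqrtExcessFn f c) xb) :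
    ∃ (y U : ℕ → En n) (S : ℕ → ℝ), Tendsto y atTop (𝓝 xb) ∧ Tendsto U atTop (𝓝 u) ∧
      Tendsto S atTop (𝓝 0) ∧ (∀ k, 0 < S k) ∧ (∀ k, f (y k) = ((c + S k ^ 2 : ℝ) : EReal)) ∧
      ∀ k, (2 * S k) • U k ∈ LimSubgrad f (y k) := by
  obtain ⟨yk, uk, hy, hu, hg, hgt, hlim⟩ := hu
  rw [sqrtExcessFn_of_eq_coe_add_sq le_rfl (by simpa using hfc)] at hg hgt
  have hpos : ∀ᶠ k in atTop, 0 < sqrtExcess c (f (yk k)) := by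
    filter_upwards [eventually_sqrtExcessFn_eq hg] with k hk
    exact EReal.coe_lt_coe_iff.1 (hk ▸ hgt k)
  obtain ⟨N, hN⟩ := hpos.exists_forall_of_atTop
  have hposN : ∀ k, 0 < sqrtExcess c (f (yk (k + N))) := fun k => hN _ (Nat.le_add_left _ _)
  exact ⟨fun k => yk (k + N), fun k => uk (k + N), fun k => sqrtExcess c (f (yk (k + N))),
    (tendsto_add_atTop_iff_nat N).2 hy, (tendsto_add_atTop_iff_nat N).2 hu,
    (tendsto_add_atTop_iff_nat N).2 (tendsto_sqrtExcess hg), hposN,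
    fun k => eq_coe_add_sqrtExcess_sq (hposN k),
    fun k => smul_mem_limSubgrad_of_sqrtExcessFn (hposN k) (eq_coe_add_sqrtExcess_sq (hposN k))
      (hlim _)⟩

end Subgradients

section ProxRegular

variable {n : ℕ} {f : En n → EReal} {c : ℝ} {xb : En n}

/-- Prox-regularity tested at `x' = xb`. -/
lemma ProxRegularAt.exists_sq_le (h : ProxRegularAt f xb c) (hfc : f xb = c) :
    ∃ ε > 0, ∃ ρ ≥ 0, ∀ (y v : En n) (s : ℝ), v ∈ LimSubgrad f y → ‖v‖ < ε → ‖y - xb‖ < ε →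
      s ^ 2 < ε → f y = ((c + s ^ 2 : ℝ) : EReal) →
      s ^ 2 ≤ ‖v‖ * ‖y - xb‖ + ρ / 2 * ‖y - xb‖ ^ 2 := by
  obtain ⟨-, -, ε, hε, ρ, hρ, hineq⟩ := h
  refine ⟨ε, hε, ρ, hρ, fun y v s hv hvε hyε hsε hfy => ?_⟩
  have hfyε : f y < (c : EReal) + (ε : EReal) := by
    rw [hfy, ← EReal.coe_add, EReal.coe_lt_coe_iff]
    linarith
  have hprox := hineq y v hv hvε hyε hfyε xb (by simpa using hε.le)
  rw [hfy, hfc, ← EReal.coe_add, EReal.coe_le_coe_iff, norm_sub_rev] at hprox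
  have hinner := neg_le_of_abs_le (abs_real_inner_le_norm v (xb - y))
  rw [norm_sub_rev] at hinner
  linarith

lemma ProxRegularAt.exists_eventually_le_mul_norm_sub (h : ProxRegularAt f xb c)
    (hfc : f xb = c) {u : En n} {y U : ℕ → En n} {S : ℕ → ℝ} (hy : Tendsto y atTop (𝓝 xb))
    (hU : Tendsto U atTop (𝓝 u)) (hS : Tendsto S atTop (𝓝 0)) (hSpos : ∀ k, 0 < S k)
    (hfy : ∀ k, f (y k) = ((c + S k ^ 2 : ℝ) : EReal))
    (hv : ∀ k, (2 * S k) • U k ∈ LimSubgrad f (y k)) :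
    ∃ B, ∀ᶠ k in atTop, S k ≤ B * ‖y k - xb‖ := by
  obtain ⟨ε, hε, ρ, hρ, hsq⟩ := h.exists_sq_le hfc
  have hv0 : Tendsto (fun k => ‖(2 * S k) • U k‖) atTop (𝓝 0) := by
    simpa using ((hS.const_mul 2).smul hU).norm
  have hy0 : Tendsto (fun k => ‖y k - xb‖) atTop (𝓝 0) := by
    simpa using (hy.sub_const xb).norm
  refine ⟨2 * (‖u‖ + 1) + ρ / 2 + 1, ?_⟩
  filter_upwards [hv0.eventually_lt_const hε, hy0.eventually_lt_const hε,
    (by simpa using hS.pow 2 : Tendsto (fun k => S k ^ 2) atTop (𝓝 0)).eventually_lt_const hε,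
    hU.norm.eventually_lt_const (lt_add_one ‖u‖)] with k hvε hyε hSε hUk
  have hk := hsq (y k) _ (S k) (hv k) hvε hyε hSε (hfy k)
  rw [norm_smul, Real.norm_of_nonneg (by linarith [hSpos k])] at hk
  refine le_mul_of_sq_le (norm_nonneg _) (by positivity) (by positivity) ?_
  have := mul_le_mul_of_nonneg_left hUk.le (mul_nonneg (hSpos k).le (norm_nonneg (y k - xb)))
  nlinarith

end ProxRegular

lemma mem_graphDerivSubdiff_of_tendsto {n : ℕ} {f : En n → EReal} {xb w z : En n}
    {x v : ℕ → En n} (hx : Tendsto x atTop (𝓝 xb)) (hne : ∀ k, x k ≠ xb)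
    (hw : Tendsto (fun k => ‖x k - xb‖⁻¹ • (x k - xb)) atTop (𝓝 w))
    (hv : ∀ k, v k ∈ LimSubgrad f (x k))
    (hz : Tendsto (fun k => ‖x k - xb‖⁻¹ • v k) atTop (𝓝 z)) :
    z ∈ GraphDerivSubdiff f xb w := by
  have hr : ∀ k, ‖x k - xb‖ ≠ 0 := fun k => norm_ne_zero_iff.2 (sub_ne_zero.2 (hne k))
  refine ⟨fun k => ‖x k - xb‖, _, _, ?_, hw, hz, fun k => ?_⟩
  · refine tendsto_nhdsWithin_iff.2 ⟨by simpa using (hx.sub_const xb).norm, ?_⟩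
    exact Eventually.of_forall fun k => (norm_nonneg _).lt_of_ne' (hr k)
  · rw [smul_inv_smul₀ (hr k), smul_inv_smul₀ (hr k), add_sub_cancel]
    exact hv k

lemma exists_subseq_tendsto_dir_and_div {n : ℕ} {xb : En n} {y : ℕ → En n} {S : ℕ → ℝ} {B : ℝ}
    (hne : ∀ k, y k ≠ xb) (hS : ∀ k, 0 ≤ S k) (hB : ∀ᶠ k in atTop, S k ≤ B * ‖y k - xb‖) :
    ∃ w : En n, ‖w‖ = 1 ∧ ∃ q : ℝ, 0 ≤ q ∧ ∃ φ : ℕ → ℕ, StrictMono φ ∧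
      Tendsto (fun k => ‖y (φ k) - xb‖⁻¹ • (y (φ k) - xb)) atTop (𝓝 w) ∧
      Tendsto (fun k => S (φ k) / ‖y (φ k) - xb‖) atTop (𝓝 q) := by
  have hr (k : ℕ) : 0 < ‖y k - xb‖ := norm_sub_pos_iff.2 (hne k)
  have hfreq : ∃ᶠ k in atTop, (‖y k - xb‖⁻¹ • (y k - xb), S k / ‖y k - xb‖) ∈
      Metric.sphere (0 : En n) 1 ×ˢ Set.Icc 0 B := by
    refine (hB.mono fun k hk =>
      ⟨?_, div_nonneg (hS k) (hr k).le, (div_le_iff₀ (hr k)).2 hk⟩).frequently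
    simp [norm_smul, (hr k).ne']
  obtain ⟨⟨w, q⟩, ⟨hw, hq, -⟩, φ, hφ, hlim⟩ :=
    ((isCompact_sphere _ _).prod isCompact_Icc).tendsto_subseq' hfreq
  exact ⟨w, by simpa using hw, q, hq, φ, hφ, (continuous_fst.tendsto _).comp hlim,
    (continuous_snd.tendsto _).comp hlim⟩

theorem statement_10_general {n : ℕ} (f : En n → EReal)
    (xb : En n) (c : ℝ) (hfc : f xb = (c : ℝ))
    (hprox : ProxRegularAt f xb c)
    (g : En n → EReal)
    (hg : g = fun x => if f x = ⊤ then (⊤ : EReal)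
      else ((Real.sqrt (max (f x - (c : ℝ)).toReal 0) : ℝ) : EReal))
    (u : En n) (hu : u ∈ OuterSubgrad g xb) :
    ∃ τ : ℝ, 0 ≤ τ ∧ ∃ w : En n, ‖w‖ = 1 ∧ ∃ xk vk : ℕ → En n,
      Tendsto xk atTop (nhds xb) ∧
      Tendsto (fun k => f (xk k)) atTop (nhds (f xb)) ∧
      (∀ k, f xb < f (xk k)) ∧
      (∀ k, vk k ∈ LimSubgrad f (xk k)) ∧
      Tendsto (fun k => (f (xk k) - (c : ℝ)).toReal / (‖xk k - xb‖ ^ 2 / 2))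
        atTop (nhds τ) ∧
      Tendsto (fun k => (‖xk k - xb‖)⁻¹ • (xk k - xb)) atTop (nhds w) ∧
      Tendsto (fun k => (‖xk k - xb‖)⁻¹ • vk k) atTop (nhds (Real.sqrt (2 * τ) • u)) ∧
      Real.sqrt (2 * τ) • u ∈ GraphDerivSubdiff f xb w := by
  obtain rfl : g = sqrtExcessFn f c := hg
  obtain ⟨y, U, S, hy, hU, hS, hSpos, hfy, hv⟩ :=
    exists_seq_of_mem_outerSubgrad_sqrtExcessFn hfc hu
  have hfxb (k : ℕ) : f xb < f (y k) := by
    rw [hfc, hfy k, EReal.coe_lt_coe_iff]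
    exact lt_add_of_pos_right c (pow_pos (hSpos k) 2)
  have hne (k : ℕ) : y k ≠ xb := fun h => (hfxb k).ne (h ▸ rfl)
  have hr (k : ℕ) : ‖y k - xb‖ ≠ 0 := norm_ne_zero_iff.2 (sub_ne_zero.2 (hne k))
  obtain ⟨B, hB⟩ := hprox.exists_eventually_le_mul_norm_sub hfc hy hU hS hSpos hfy hv
  obtain ⟨w, hw, q, hq0, φ, hφ, hd, hq⟩ :=
    exists_subseq_tendsto_dir_and_div hne (fun k => (hSpos k).le) hB
  have hsqrt : √(2 * (2 * q ^ 2)) = 2 * q := by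
    rw [show 2 * (2 * q ^ 2) = (2 * q) ^ 2 by ring, Real.sqrt_sq (by positivity)]
  have hvlim : Tendsto (fun k => ‖y (φ k) - xb‖⁻¹ • ((2 * S (φ k)) • U (φ k))) atTop
      (𝓝 ((2 * q) • u)) := by
    refine ((hq.const_mul 2).smul (hU.comp hφ.tendsto_atTop)).congr fun k => ?_
    rw [smul_smul, Function.comp_apply]
    ring_nf
  refine ⟨2 * q ^ 2, by positivity, w, hw, y ∘ φ, fun k => (2 * S (φ k)) • U (φ k),
    hy.comp hφ.tendsto_atTop, ?_, fun k => hfxb _, fun k => hv _, ?_, hd, hsqrt ▸ hvlim,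
    hsqrt ▸ mem_graphDerivSubdiff_of_tendsto (hy.comp hφ.tendsto_atTop) (fun k => hne _) hd
      (fun k => hv _) hvlim⟩
  · have hS0 : Tendsto (fun k => ((c + S (φ k) ^ 2 : ℝ) : EReal)) atTop (𝓝 ((c + 0 ^ 2 : ℝ))) :=
      EReal.tendsto_coe.2 (tendsto_const_nhds.add ((hS.comp hφ.tendsto_atTop).pow 2))
    simpa [hfc, Function.comp_apply, hfy] using hS0
  · refine ((hq.pow 2).const_mul 2).congr fun k => ?_
    rw [Function.comp_apply, hfy, ← EReal.coe_sub, EReal.toReal_coe, add_sub_cancel_left]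
    field_simp [hr (φ k)]

/-- for `f` prox-regular at `xb` for `0`, every outer limiting
subgradient `u` of `g = √(max{f - f(xb),0})` is generated along a ray: there
exist `τ ≥ 0`, a unit vector `w`, and subgradient sequences realizing the
normalized limits, with `√(2τ)·u ∈ D(∂f)(xb|0)(w)`. -/
theorem statement_10 {n : ℕ} (f : En n → EReal) (hbot : ∀ x, f x ≠ ⊥)
    (xb : En n) (c : ℝ) (hfc : f xb = (c : ℝ))
    (hprox : ProxRegularAt f xb c)
    (g : En n → EReal)
    (hg : g = fun x => if f x = ⊤ then (⊤ : EReal)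
      else ((Real.sqrt (max (f x - (c : ℝ)).toReal 0) : ℝ) : EReal))
    (u : En n) (hu : u ∈ OuterSubgrad g xb) :
    ∃ τ : ℝ, 0 ≤ τ ∧ ∃ w : En n, ‖w‖ = 1 ∧ ∃ xk vk : ℕ → En n,
      Tendsto xk atTop (nhds xb) ∧
      Tendsto (fun k => f (xk k)) atTop (nhds (f xb)) ∧
      (∀ k, f xb < f (xk k)) ∧
      (∀ k, vk k ∈ LimSubgrad f (xk k)) ∧
      Tendsto (fun k => (f (xk k) - (c : ℝ)).toReal / (‖xk k - xb‖ ^ 2 / 2))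
        atTop (nhds τ) ∧
      Tendsto (fun k => (‖xk k - xb‖)⁻¹ • (xk k - xb)) atTop (nhds w) ∧
      Tendsto (fun k => (‖xk k - xb‖)⁻¹ • vk k) atTop (nhds (Real.sqrt (2 * τ) • u)) ∧
      Real.sqrt (2 * τ) • u ∈ GraphDerivSubdiff f xb w :=
  statement_10_general f xb c hfc hprox g hg u hu
end
end

section
/- Let f : ℝⁿ → ℝ ∪ {+∞} be prox-regular at x̄ for 0, and suppose the graphical derivative of the subgradient mapping is nonsingular: [D(∂f)(x̄ | 0)]^{-1}(0) = {0}. Then f satisfies the Kurdyka–Łojasiewicz property at x̄ with exponent ½: there exist μ > 0, ε > 0, and ν > 0 such that d(0, ∂f(x)) ≥ 2μ (max{f(x) − f(x̄), 0})^{1/2} whenever ‖x − x̄‖ ≤ ε and f(x) < f(x̄) + ν. -/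
open Filter Topology
open scoped ENNReal NNReal Pointwise

noncomputable section

/-!
Nonsingularity of the graphical derivative of `∂f` yields, by compactness of the unit sphere
applied to the normalized directions `(x - x̄) / ‖x - x̄‖`, strong metric subregularity:
`‖x - x̄‖ ≤ κ ‖v‖` for `v ∈ ∂f(x)` and `x` near `x̄`. Taking `x' = x̄` in the prox-regularity
inequality at `(x, v)` then gives
`f(x) - f(x̄) ≤ ⟨v, x - x̄⟩ + (ρ/2)‖x - x̄‖² ≤ (κ + ρκ²/2) ‖v‖²` for small `v`, while for
`‖v‖ ≥ ε` the bound `f(x) - f(x̄) < ε ≤ ‖v‖² / ε` is automatic. Taking square roots gives the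
KŁ inequality with exponent `1/2`.
-/

lemma sub_le_mul_norm_sq_of_prox_ineq {E : Type*} [NormedAddCommGroup E]
    [InnerProductSpace ℝ E] {x xb v : E} {r c ρ κ : ℝ} (hρ : 0 ≤ ρ)
    (hprox : r + (inner ℝ v (xb - x) - ρ / 2 * ‖xb - x‖ ^ 2) ≤ c)
    (hsub : ‖x - xb‖ ≤ κ * ‖v‖) :
    r - c ≤ (κ + ρ * κ ^ 2 / 2) * ‖v‖ ^ 2 := by
  have hinner : -inner ℝ v (xb - x) ≤ κ * ‖v‖ ^ 2 := by
    calc -inner ℝ v (xb - x) = inner ℝ v (x - xb) := by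
          rw [← inner_neg_right, neg_sub]
      _ ≤ ‖v‖ * ‖x - xb‖ := real_inner_le_norm v (x - xb)
      _ ≤ ‖v‖ * (κ * ‖v‖) := mul_le_mul_of_nonneg_left hsub (norm_nonneg v)
      _ = κ * ‖v‖ ^ 2 := by ring
  have hsq : ‖xb - x‖ ^ 2 ≤ κ ^ 2 * ‖v‖ ^ 2 := by
    rw [norm_sub_rev, ← mul_pow]
    exact pow_le_pow_left₀ (norm_nonneg _) hsub 2
  nlinarith [mul_le_mul_of_nonneg_left hsq (by positivity : 0 ≤ ρ / 2)]

lemma exists_unit_zero_mem_graphDerivSubdiff {n : ℕ} {f : En n → EReal} {xb : En n}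
    {x v : ℕ → En n} (hx : Tendsto x atTop (𝓝 xb)) (hne : ∀ k, x k ≠ xb)
    (hv : ∀ k, v k ∈ LimSubgrad f (x k))
    (hratio : Tendsto (fun k => ‖x k - xb‖⁻¹ • v k) atTop (𝓝 0)) :
    ∃ w : En n, ‖w‖ = 1 ∧ (0 : En n) ∈ GraphDerivSubdiff f xb w := by
  set t : ℕ → ℝ := fun k => ‖x k - xb‖
  have ht : ∀ k, t k ≠ 0 := fun k => norm_ne_zero_iff.2 (sub_ne_zero.2 (hne k))
  have hsphere : ∀ k, (t k)⁻¹ • (x k - xb) ∈ Metric.sphere (0 : En n) 1 := fun k => by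
    simpa using norm_smul_inv_norm (𝕜 := ℝ) (sub_ne_zero.2 (hne k))
  obtain ⟨w, hw, φ, hφ, hwlim⟩ := (isCompact_sphere (0 : En n) 1).tendsto_subseq hsphere
  have htlim : Tendsto t atTop (𝓝[>] 0) := by
    refine tendsto_nhdsWithin_iff.2 ⟨?_, .of_forall fun k => (norm_nonneg _).lt_of_ne' (ht k)⟩
    simpa using (hx.sub_const xb).norm
  refine ⟨w, by simpa using hw, t ∘ φ, _, _, htlim.comp hφ.tendsto_atTop, hwlim,
    hratio.comp hφ.tendsto_atTop, fun k => ?_⟩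
  simpa [t, smul_smul, mul_inv_cancel₀ (ht (φ k))] using hv (φ k)

/-- Strong metric subregularity of `∂f` at `(xb, 0)`. -/
def StrongMetricSubregAt {n : ℕ} (f : En n → EReal) (xb : En n) : Prop :=
  ∃ κ ε : ℝ, 0 < ε ∧ ∀ x : En n, ‖x - xb‖ ≤ ε → ∀ v ∈ LimSubgrad f x, ‖x - xb‖ ≤ κ * ‖v‖

lemma strongMetricSubregAt_of_nonsing {n : ℕ} {f : En n → EReal} {xb : En n}
    (hnonsing : ∀ w : En n, (0 : En n) ∈ GraphDerivSubdiff f xb w → w = 0) :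
    StrongMetricSubregAt f xb := by
  by_contra h
  simp only [StrongMetricSubregAt, not_exists, not_and, not_forall, not_le] at h
  choose x hx v hv hlt using fun k : ℕ => h (k + 1) (1 / (k + 1)) (by positivity)
  have hpos : ∀ k, 0 < ‖x k - xb‖ := fun k =>
    lt_of_le_of_lt (by positivity) (hlt k)
  have hratio : ∀ k, ‖‖x k - xb‖⁻¹ • v k‖ ≤ 1 / (k + 1) := fun k => by
    rw [norm_smul, norm_inv, norm_norm, inv_mul_le_iff₀ (hpos k), mul_one_div,
      le_div_iff₀ (by positivity)]
    linarith [hlt k]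
  obtain ⟨w, hw, hw0⟩ := exists_unit_zero_mem_graphDerivSubdiff
    (tendsto_iff_norm_sub_tendsto_zero.2 <|
      squeeze_zero (fun _ => norm_nonneg _) hx tendsto_one_div_add_atTop_nhds_zero_nat)
    (fun k => sub_ne_zero.1 (norm_pos_iff.1 (hpos k))) hv
    (tendsto_zero_iff_norm_tendsto_zero.2 <|
      squeeze_zero (fun _ => norm_nonneg _) hratio tendsto_one_div_add_atTop_nhds_zero_nat)
  simp [hnonsing w hw0] at hw

lemma max_toReal_sub_le {a : EReal} {c B : ℝ} (hB : 0 ≤ B) (ha : a ≠ ⊤)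
    (h : ∀ r : ℝ, a = r → r - c ≤ B) : max (a - c).toReal 0 ≤ B := by
  induction a using EReal.rec with
  | bot => simpa using hB
  | coe r => exact max_le (by simpa [← EReal.coe_sub] using h r rfl) hB
  | top => exact absurd rfl ha

lemma exists_sub_le_mul_norm_sq {n : ℕ} {f : En n → EReal} {xb : En n} {c : ℝ}
    (hfc : f xb = (c : ℝ)) (hprox : ProxRegularAt f xb c) (hsub : StrongMetricSubregAt f xb) :
    ∃ K : ℝ, 0 < K ∧ ∃ ε : ℝ, 0 < ε ∧ ∀ x : En n, ‖x - xb‖ ≤ ε → f x < (c : ℝ) + (ε : ℝ) →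
      ∀ v ∈ LimSubgrad f x, max (f x - (c : ℝ)).toReal 0 ≤ K * ‖v‖ ^ 2 := by
  obtain ⟨-, -, ε₁, hε₁, ρ, hρ, hineq⟩ := hprox
  obtain ⟨κ, ε₀, hε₀, hκ⟩ := hsub
  refine ⟨max (κ + ρ * κ ^ 2 / 2) ε₁⁻¹, lt_max_of_lt_right (inv_pos.2 hε₁),
    min ε₀ (ε₁ / 2), lt_min hε₀ (half_pos hε₁), fun x hx hfx v hv => ?_⟩
  have hxε₁ : ‖x - xb‖ < ε₁ := by linarith [min_le_right ε₀ (ε₁ / 2)]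
  have hfxε₁ : f x < (c : ℝ) + (ε₁ : ℝ) :=
    hfx.trans_le (by gcongr; exact_mod_cast (min_le_right _ _).trans (half_le_self hε₁.le))
  refine max_toReal_sub_le (by positivity) (ne_top_of_lt hfx) fun r hr => ?_
  by_cases hv_small : ‖v‖ < ε₁
  · have hprox := hineq x v hv hv_small hxε₁ hfxε₁ xb (by simpa using hε₁.le)
    rw [hr, hfc, ← EReal.coe_add, EReal.coe_le_coe_iff] at hprox
    calc r - c ≤ (κ + ρ * κ ^ 2 / 2) * ‖v‖ ^ 2 :=
          sub_le_mul_norm_sq_of_prox_ineq hρ hprox (hκ x (hx.trans (min_le_left _ _)) v hv)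
      _ ≤ _ := by gcongr; exact le_max_left _ _
  · have hrc : r - c < ε₁ := by
      rw [hr, ← EReal.coe_add, EReal.coe_lt_coe_iff] at hfxε₁; linarith
    calc r - c ≤ ε₁⁻¹ * ‖v‖ ^ 2 := by
          rw [inv_mul_eq_div, le_div_iff₀ hε₁]; nlinarith
      _ ≤ _ := by gcongr; exact le_max_right _ _

lemma le_distZero_of_forall_le_norm {n : ℕ} {S : Set (En n)} {a : ℝ}
    (h : ∀ v ∈ S, a ≤ ‖v‖) : ENNReal.ofReal a ≤ DistZero S :=
  Metric.le_infEDist.2 fun v hv => by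
    rw [edist_dist, dist_zero_left]; exact ENNReal.ofReal_le_ofReal (h v hv)

lemma two_mul_inv_sqrt_mul_sqrt_le {m K a : ℝ} (hK : 0 < K) (ha : 0 ≤ a) (h : m ≤ K * a ^ 2) :
    2 * (2 * √K)⁻¹ * √m ≤ a := by
  have hsK : 0 < √K := Real.sqrt_pos.2 hK
  calc 2 * (2 * √K)⁻¹ * √m ≤ 2 * (2 * √K)⁻¹ * (√K * a) := by
        gcongr
        calc √m ≤ √(K * a ^ 2) := Real.sqrt_le_sqrt h
          _ = √K * a := by rw [Real.sqrt_mul hK.le, Real.sqrt_sq ha]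
    _ = a := by field_simp

theorem statement_11_general {n : ℕ} (f : En n → EReal)
    (xb : En n) (c : ℝ) (hfc : f xb = (c : ℝ))
    (hprox : ProxRegularAt f xb c)
    (hnonsing : ∀ w : En n, (0 : En n) ∈ GraphDerivSubdiff f xb w → w = 0) :
    ∃ μ : ℝ, 0 < μ ∧ ∃ ε : ℝ, 0 < ε ∧ ∃ ν : ℝ, 0 < ν ∧
      ∀ x : En n, ‖x - xb‖ ≤ ε → f x < (c : ℝ) + (ν : ℝ) →
        ENNReal.ofReal (2 * μ * Real.sqrt (max (f x - (c : ℝ)).toReal 0)) ≤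
          DistZero (LimSubgrad f x) := by
  obtain ⟨K, hK, ε, hε, hgrowth⟩ :=
    exists_sub_le_mul_norm_sq hfc hprox (strongMetricSubregAt_of_nonsing hnonsing)
  refine ⟨(2 * √K)⁻¹, by positivity, ε, hε, ε, hε, fun x hx hfx =>
    le_distZero_of_forall_le_norm fun v hv => ?_⟩
  exact two_mul_inv_sqrt_mul_sqrt_le hK (norm_nonneg v) (hgrowth x hx hfx v hv)

/-- prox-regularity at `xb` for `0` together with nonsingularity of
the graphical derivative of `∂f` implies the KŁ property with exponent `1/2`. -/
theorem statement_11 {n : ℕ} (f : En n → EReal) (hbot : ∀ x, f x ≠ ⊥)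
    (xb : En n) (c : ℝ) (hfc : f xb = (c : ℝ))
    (hprox : ProxRegularAt f xb c)
    (hnonsing : ∀ w : En n, (0 : En n) ∈ GraphDerivSubdiff f xb w → w = 0) :
    ∃ μ : ℝ, 0 < μ ∧ ∃ ε : ℝ, 0 < ε ∧ ∃ ν : ℝ, 0 < ν ∧
      ∀ x : En n, ‖x - xb‖ ≤ ε → f x < (c : ℝ) + (ν : ℝ) →
        ENNReal.ofReal (2 * μ * Real.sqrt (max (f x - (c : ℝ)).toReal 0)) ≤
          DistZero (LimSubgrad f x) :=
  statement_11_general f xb c hfc hprox hnonsing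
end
end
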